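/- arXiv:2508.07752 — 6 statements merged into one kernel-verified Lean document; each statement's English description precedes it below -/
import Mathlib

section
/- Let M be a module over the ring R₀ = ∏_{F ∈ 𝓕} ℚ (product over a countably infinite index set 𝓕). For a subset U ⊆ 𝓕 let e_U denote the idempotent of R₀ with support U, and define e_G M = colim_U e_U M, the colimit over cofinite subsets U of 𝓕 ordered by reverse inclusion. If e_{{F}} M = 0 for all F ∈ 𝓕 and e_G M = 0, then M = 0. -/
/-!
Every `m` is killed by some cofinite idempotent `e_U`; writing `1 = e_U + e_{Uᶜ}`, it remains to see
that `e_{Uᶜ} m = 0`, and since `Uᶜ` is finite, `e_{Uᶜ}` is the finite sum of the `e_{{F}}`, `F ∉ U`,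
each of which kills `m`.
-/

/-- The idempotent of `∏_{F ∈ ι} ℚ` with support `U`. -/
noncomputable def eU {ι : Type} (U : Set ι) : ι → ℚ :=
  Set.indicator U (fun _ => (1 : ℚ))

namespace eU

variable {ι : Type}

theorem empty : eU (∅ : Set ι) = 0 :=
  Set.indicator_empty _

theorem insert_of_notMem {a : ι} {s : Set ι} (ha : a ∉ s) :
    eU (insert a s) = eU {a} + eU s :=
  Set.indicator_union_of_disjoint (Set.disjoint_singleton_left.mpr ha) _

theorem add_compl (U : Set ι) : eU U + eU Uᶜ = 1 :=
  Set.indicator_self_add_compl U _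

variable {M : Type} [AddCommGroup M] [Module (ι → ℚ) M]

theorem smul_eq_zero_of_finite {m : M} (hsingle : ∀ F : ι, eU {F} • m = 0)
    {S : Set ι} (hS : S.Finite) : eU S • m = 0 := by
  induction S, hS using Set.Finite.induction_on with
  | empty => rw [empty, zero_smul]
  | @insert a s ha _ ih => rw [insert_of_notMem ha, add_smul, hsingle, ih, add_zero]

end eU

theorem stmt0_general (ι : Type)
    (M : Type) [AddCommGroup M] [Module (ι → ℚ) M]
    (h1 : ∀ (F : ι) (m : M), eU {F} • m = 0)
    (h2 : ∀ m : M, ∃ U : Set ι, Uᶜ.Finite ∧ eU U • m = 0) :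
    ∀ m : M, m = 0 := by
  intro m
  obtain ⟨U, hUc, hU⟩ := h2 m
  calc m = (eU U + eU Uᶜ) • m := by rw [eU.add_compl, one_smul]
    _ = 0 := by rw [add_smul, hU, eU.smul_eq_zero_of_finite (h1 · m) hUc, add_zero]

/-- If `M` is a module over `R₀ = ∏_{F ∈ 𝓕} ℚ` (𝓕 countably infinite) with
`e_{{F}} M = 0` for all `F` and `e_G M = colim_{U cofinite} e_U M = 0`
(i.e. every element is killed by some cofinite idempotent), then `M = 0`. -/
theorem stmt0 (ι : Type) [Countable ι] [Infinite ι]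
    (M : Type) [AddCommGroup M] [Module (ι → ℚ) M]
    (h1 : ∀ (F : ι) (m : M), eU {F} • m = 0)
    (h2 : ∀ m : M, ∃ U : Set ι, Uᶜ.Finite ∧ eU U • m = 0) :
    ∀ m : M, m = 0 :=
  stmt0_general ι M h1 h2
end

section
/- Let 𝓕 be a countably infinite set, R₀ = ∏_{F ∈ 𝓕} ℚ, and let 𝓘 be the multiplicatively closed set of idempotents e_U with cofinite support U ⊆ 𝓕. Then there is a short exact sequence of R₀-modules 0 → ⊕_{F ∈ 𝓕} ℚ → ∏_{F ∈ 𝓕} ℚ → 𝓘⁻¹ ∏_{F ∈ 𝓕} ℚ → 0, i.e. the kernel of the localization map ∏ ℚ → 𝓘⁻¹ ∏ ℚ is exactly the direct sum ⊕ ℚ, and the localization map is surjective. -/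
/-- The multiplicatively closed set `𝓘` of idempotents of `∏_{F ∈ ι} ℚ`
with cofinite support. -/
noncomputable def Icof (ι : Type) : Submonoid (ι → ℚ) where
  carrier := {f | ∃ U : Set ι, Uᶜ.Finite ∧ f = eU U}
  one_mem' := ⟨Set.univ, by simp, by funext x; simp [eU]⟩
  mul_mem' := by
    rintro f g ⟨U, hU, rfl⟩ ⟨V, hV, rfl⟩
    refine ⟨U ∩ V, ?_, ?_⟩
    · rw [Set.compl_inter]; exact hU.union hV
    · funext x
      by_cases hx1 : x ∈ U <;> by_cases hx2 : x ∈ V <;>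
        simp [eU, Set.indicator_apply, hx1, hx2]

lemma eU_idem {ι : Type} (U : Set ι) : eU U * eU U = eU U := by
  funext x
  by_cases hx : x ∈ U <;> simp [eU, Set.indicator_apply, hx]

lemma algebraMap_Icof_eq_one {ι : Type} (s : Icof ι) :
    algebraMap (ι → ℚ) (Localization (Icof ι)) s = 1 := by
  obtain ⟨U, hU, hs⟩ := s.2
  have hidem : (s : ι → ℚ) * s = s := by rw [hs]; exact eU_idem U
  have hu := IsLocalization.map_units (Localization (Icof ι)) s
  have h2 : algebraMap (ι → ℚ) (Localization (Icof ι)) s *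
      algebraMap (ι → ℚ) (Localization (Icof ι)) s =
      algebraMap (ι → ℚ) (Localization (Icof ι)) s * 1 := by
    rw [← map_mul, hidem, mul_one]
  exact hu.mul_left_cancel h2

/-- The short exact sequence `0 → ⊕_𝓕 ℚ → ∏_𝓕 ℚ → 𝓘⁻¹ ∏_𝓕 ℚ → 0`:
the localization map `∏ ℚ → 𝓘⁻¹ ∏ ℚ` is surjective and its kernel is exactly
the set of finitely supported functions `⊕_𝓕 ℚ`. -/
theorem stmt1 (ι : Type) [Countable ι] [Infinite ι] :
    Function.Surjective (algebraMap (ι → ℚ) (Localization (Icof ι))) ∧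
    ∀ f : ι → ℚ,
      algebraMap (ι → ℚ) (Localization (Icof ι)) f = 0 ↔
        (Function.support f).Finite := by
  constructor
  · intro z
    obtain ⟨⟨r, s⟩, hz⟩ := IsLocalization.surj (Icof ι) z
    refine ⟨r, ?_⟩
    rw [← hz, algebraMap_Icof_eq_one, mul_one]
  · intro f
    rw [IsLocalization.map_eq_zero_iff (Icof ι)]
    constructor
    · rintro ⟨⟨m, U, hU, rfl⟩, hm⟩
      refine hU.subset fun x hx => ?_
      by_contra hxU
      have := congrFun hm x
      simp only [Pi.mul_apply, Pi.zero_apply, eU,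
        Set.indicator_of_mem (Set.not_notMem.mp hxU)] at this
      exact hx (by simpa using this)
    · intro hf
      refine ⟨⟨eU (Function.support f)ᶜ, (Function.support f)ᶜ, by simpa using hf, rfl⟩, ?_⟩
      funext x
      by_cases hx : f x = 0
      · simp [hx]
      · simp [eU, Set.indicator_apply, hx]
end

section
/- Let 𝓕 be a countably infinite set and 𝓘 the set of idempotents of ∏_{F ∈ 𝓕} ℚ with cofinite support. The short exact sequence 0 → ⊕_{F} ℚ → ∏_{F} ℚ → 𝓘⁻¹ ∏_{F} ℚ → 0 of ∏_{F} ℚ-modules does not split. -/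
/-- `⊕_{F ∈ ι} ℚ`: the submodule of `∏_{F ∈ ι} ℚ` of finitely supported
functions, as a module over `R₀ = ∏_{F ∈ ι} ℚ`. -/
def finSupp (ι : Type) : Submodule (ι → ℚ) (ι → ℚ) where
  carrier := {f | (Function.support f).Finite}
  zero_mem' := by simp
  add_mem' := by
    intro f g hf hg
    exact (hf.union hg).subset (Function.support_add f g)
  smul_mem' := by
    intro c f hf
    refine hf.subset ?_
    intro x hx
    simp only [Function.mem_support] at hx ⊢
    intro h
    exact hx (by simp [Pi.smul_apply, smul_eq_mul, h])

/-! A retraction `p` of `⊕ ℚ → ∏ ℚ` would satisfy `δᵢ • p 1 = p δᵢ = δᵢ` for every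
standard idempotent `δᵢ`, so `p 1` would be `1` everywhere, which is not finitely supported.
A section of the localization map would produce such a retraction by the splitting lemma, since
the kernel of `∏ ℚ → 𝓘⁻¹ ∏ ℚ` is exactly `⊕ ℚ`. -/

variable {ι : Type}

theorem mem_finSupp_iff {f : ι → ℚ} : f ∈ finSupp ι ↔ (Function.support f).Finite := Iff.rfl

theorem Pi.single_mem_finSupp [DecidableEq ι] (i : ι) (c : ℚ) : Pi.single i c ∈ finSupp ι :=
  (Set.finite_singleton i).subset Pi.support_single_subset

theorem eU_mul_eq_zero_iff {U : Set ι} {f : ι → ℚ} :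
    eU U * f = 0 ↔ Function.support f ⊆ Uᶜ := by
  simp only [funext_iff, Pi.mul_apply, Pi.zero_apply, eU, Set.subset_def,
    Function.mem_support, Set.mem_compl_iff]
  refine forall_congr' fun x => ?_
  by_cases hx : x ∈ U <;> simp [hx]

theorem not_exists_retraction_finSupp [Infinite ι] :
    ¬ ∃ p : (ι → ℚ) →ₗ[ι → ℚ] finSupp ι, ∀ x : finSupp ι, p (x : ι → ℚ) = x := by
  classical
  rintro ⟨p, hp⟩
  have hp_one : ∀ i, (p 1 : ι → ℚ) i = 1 := fun i => by
    have h : (Pi.single i 1 : ι → ℚ) • p 1 = ⟨Pi.single i 1, Pi.single_mem_finSupp i 1⟩ := by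
      rw [← p.map_smul, smul_eq_mul, mul_one]
      exact hp ⟨_, _⟩
    simpa using congrFun (congrArg Subtype.val h) i
  have hsupp : Function.support (p 1 : ι → ℚ) = Set.univ :=
    Set.eq_univ_of_forall fun i => by simp [hp_one i]
  exact Set.infinite_univ (hsupp ▸ (p 1).2 : (Set.univ : Set ι).Finite)

theorem algebraMap_localization_eq_zero_iff {f : ι → ℚ} :
    algebraMap (ι → ℚ) (Localization (Icof ι)) f = 0 ↔ f ∈ finSupp ι := by
  rw [IsLocalization.map_eq_zero_iff (Icof ι), mem_finSupp_iff]
  constructor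
  · rintro ⟨⟨_, U, hU, rfl⟩, he⟩
    exact hU.subset (eU_mul_eq_zero_iff.mp he)
  · intro hf
    exact ⟨⟨_, (Function.support f)ᶜ, by rwa [compl_compl], rfl⟩,
      eU_mul_eq_zero_iff.mpr (by rw [compl_compl])⟩

theorem exact_finSupp_subtype_algebraMap :
    Function.Exact (finSupp ι).subtype (Algebra.linearMap (ι → ℚ) (Localization (Icof ι))) := by
  intro f
  rw [Algebra.linearMap_apply, algebraMap_localization_eq_zero_iff]
  simp

theorem stmt2_general (ι : Type) [Infinite ι] :
    (¬ ∃ p : (ι → ℚ) →ₗ[ι → ℚ] finSupp ι, ∀ x : finSupp ι, p (x : ι → ℚ) = x) ∧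
    (¬ ∃ s : Localization (Icof ι) →ₗ[ι → ℚ] (ι → ℚ),
        ∀ y : Localization (Icof ι),
          algebraMap (ι → ℚ) (Localization (Icof ι)) (s y) = y) := by
  refine ⟨not_exists_retraction_finSupp, ?_⟩
  rintro ⟨s, hs⟩
  have hsplit := (exact_finSupp_subtype_algebraMap (ι := ι)).split_tfae'.out 0 1
  obtain ⟨-, p, hp⟩ := hsplit.mp ⟨Subtype.val_injective, s, LinearMap.ext hs⟩
  exact not_exists_retraction_finSupp ⟨p, LinearMap.congr_fun hp⟩

/-- The short exact sequence `0 → ⊕ ℚ → ∏ ℚ → 𝓘⁻¹ ∏ ℚ → 0` does not split: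
there is no `∏ ℚ`-module retraction `∏ ℚ → ⊕ ℚ` of the inclusion, and no
`∏ ℚ`-module section `𝓘⁻¹ ∏ ℚ → ∏ ℚ` of the localization map. -/
theorem stmt2 (ι : Type) [Countable ι] [Infinite ι] :
    (¬ ∃ p : (ι → ℚ) →ₗ[ι → ℚ] finSupp ι, ∀ x : finSupp ι, p (x : ι → ℚ) = x) ∧
    (¬ ∃ s : Localization (Icof ι) →ₗ[ι → ℚ] (ι → ℚ),
        ∀ y : Localization (Icof ι),
          algebraMap (ι → ℚ) (Localization (Icof ι)) (s y) = y) :=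
  stmt2_general ι
end

section
/- Let X be a Stone space and 𝓕 a sheaf of ℚ-vector spaces on X. Then 𝓕 is soft: for every closed subset K ⊆ X, the restriction map 𝓕(X) → 𝓕(K) := colim_{U ⊇ K open} 𝓕(U) is surjective. -/
/-! A closed `K` inside an open `U` of a Stone space lies in a clopen `V ⊆ U`. Since `V` and `Vᶜ`
are disjoint opens covering `X`, the sheaf condition gives `𝓕(X) ≅ 𝓕(V) × 𝓕(Vᶜ)`, so the
restriction of a section over `U` to `V` extends by zero on `Vᶜ` to a global section. -/

open CategoryTheory TopologicalSpace Opposite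

namespace TopCat.Sheaf

variable {C : Type*} [Category* C] [Limits.HasZeroMorphisms C] {X : TopCat} (F : X.Sheaf C)

theorem isSplitEpi_map_of_inf_eq_bot_of_sup_eq {U V W : Opens X} (hVU : V ≤ U)
    (hVW : V ⊓ W = ⊥) (hU : V ⊔ W = U) : IsSplitEpi (F.1.map (homOfLE hVU).op) := by
  subst hU
  exact ⟨⟨(F.isProductOfDisjoint V W hVW).lift (Limits.BinaryFan.mk (𝟙 _) 0),
    (F.isProductOfDisjoint V W hVW).fac _ ⟨.left⟩⟩⟩

theorem isSplitEpi_map_top_of_isClosed {V : Opens X} (hV : IsClosed (V : Set X)) :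
    IsSplitEpi (F.1.map (homOfLE (le_top : V ≤ ⊤)).op) :=
  isSplitEpi_map_of_inf_eq_bot_of_sup_eq F le_top (W := ⟨_, hV.isOpen_compl⟩)
    (SetLike.ext' (Set.inter_compl_self _)) (SetLike.ext' (Set.union_compl_self _))

end TopCat.Sheaf

/-- Every sheaf of `ℚ`-vector spaces on a Stone space `X` is soft: for every
closed `K ⊆ X`, the map `𝓕(X) → 𝓕(K) = colim_{U ⊇ K open} 𝓕(U)` is surjective.
Elementwise: any section over an open `U ⊇ K` agrees, on some smaller open
`V` with `K ⊆ V ⊆ U`, with the restriction of a global section. -/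
theorem stmt5 (X : TopCat) [CompactSpace X] [T2Space X]
    [TotallyDisconnectedSpace X]
    (F : TopCat.Sheaf (ModuleCat ℚ) X) (K : Set X) (hK : IsClosed K) :
    ∀ (U : Opens X), K ⊆ (U : Set X) → ∀ s : F.val.obj (op U),
      ∃ (V : Opens X) (hVU : V ≤ U), K ⊆ (V : Set X) ∧
        ∃ t : F.val.obj (op ⊤),
          F.val.map (homOfLE (le_top : V ≤ ⊤)).op t =
            F.val.map (homOfLE hVU).op s := by
  intro U hKU s
  obtain ⟨V, hV, hKV, hVU⟩ := exists_clopen_of_closed_subset_open hK U.isOpen hKU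
  let V' : Opens X := ⟨V, hV.isOpen⟩
  have := TopCat.Sheaf.isSplitEpi_map_top_of_isClosed F hV.isClosed (V := V')
  obtain ⟨t, ht⟩ := (ModuleCat.epi_iff_surjective (F.1.map (homOfLE (le_top : V' ≤ ⊤)).op)).mp
    inferInstance (F.1.map (homOfLE (show V' ≤ U from hVU)).op s)
  exact ⟨V', hVU, hKV, t, ht⟩
end

section
/- Let X be a compact Stone space and M a module over R_X = Γ(ℚ_X). With eM defined stalkwise as (eM)_x = colim_{U ∋ x clopen} e_U M, the unit map M → Γ(eM) is surjective: every global section of eM is represented by a single element of M. Consequently M → Γ(eM) is an isomorphism. -/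
/-- For a clopen subset `U` of `X`, the idempotent `e_U` of the ring
`R_X = Γ(ℚ_X)` of locally constant functions `X → ℚ`: the characteristic
function of `U`. -/
noncomputable def eLC {X : Type} [TopologicalSpace X] (U : Set X)
    (hU : IsClopen U) : LocallyConstant X ℚ :=
  ⟨Set.indicator U (fun _ => (1 : ℚ)), by
    rw [IsLocallyConstant.iff_exists_open]
    intro x
    by_cases hx : x ∈ U
    · exact ⟨U, hU.2, hx, fun y hy => by
        simp [Set.indicator_apply, hy, hx]⟩
    · exact ⟨Uᶜ, hU.1.isOpen_compl, hx, fun y hy => by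
        simp only [Set.mem_compl_iff] at hy
        simp [Set.indicator_apply, hy, hx]⟩⟩

open scoped Classical

variable {X : Type} [TopologicalSpace X]

lemma eLC_apply (U : Set X) (hU : IsClopen U) (x : X) :
    eLC U hU x = if x ∈ U then 1 else 0 := by
  classical simp [eLC, Set.indicator_apply]

lemma eLC_mul (U V : Set X) (hU : IsClopen U) (hV : IsClopen V) :
    eLC U hU * eLC V hV = eLC (U ∩ V) (hU.inter hV) := by
  classical
  ext x
  simp only [LocallyConstant.coe_mul, Pi.mul_apply, eLC_apply, Set.mem_inter_iff]
  by_cases h1 : x ∈ U <;> by_cases h2 : x ∈ V <;> simp [h1, h2]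

lemma eLC_empty : eLC (∅ : Set X) isClopen_empty = 0 := by
  classical ext x; simp [eLC_apply]

lemma eLC_congr {U V : Set X} (hU : IsClopen U) (hV : IsClopen V) (h : U = V) :
    eLC U hU = eLC V hV := by subst h; rfl

lemma eLC_smul_of_subset {M : Type} [AddCommGroup M] [Module (LocallyConstant X ℚ) M]
    {U V : Set X} (hU : IsClopen U) (hV : IsClopen V) (h : U ⊆ V) (m : M) :
    eLC U hU • (eLC V hV • m) = eLC U hU • m := by
  rw [← mul_smul, eLC_mul, eLC_congr (hU.inter hV) hU (Set.inter_eq_left.2 h)]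

lemma eLC_sum_partition {n : ℕ} (V : Fin n → Set X) (hV : ∀ i, IsClopen (V i))
    (hdisj : Pairwise fun i j => Disjoint (V i) (V j)) (hcov : ⋃ i, V i = Set.univ) :
    ∑ i, eLC (V i) (hV i) = 1 := by
  classical
  ext x
  have : x ∈ ⋃ i, V i := hcov ▸ Set.mem_univ x
  obtain ⟨i, hi⟩ := Set.mem_iUnion.1 this
  have : (⇑(∑ j, eLC (V j) (hV j)) : X → ℚ) = ∑ j, ⇑(eLC (V j) (hV j)) :=
    map_sum LocallyConstant.coeFnAddMonoidHom _ _
  rw [this]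
  simp only [Finset.sum_apply, eLC_apply, LocallyConstant.coe_one, Pi.one_apply]
  rw [Finset.sum_eq_single i]
  · simp [hi]
  · intro j _ hj
    have : x ∉ V j := fun hx => (hdisj hj).le_bot ⟨hx, hi⟩
    simp [this]
  · simp

lemma exists_partition [CompactSpace X]
    (U : X → Set X) (hUc : ∀ x, IsClopen (U x)) (hxU : ∀ x, x ∈ U x) :
    ∃ (n : ℕ) (V : Fin n → Set X) (p : Fin n → X),
      (∀ i, IsClopen (V i)) ∧ (∀ i, V i ⊆ U (p i)) ∧
      (Pairwise fun i j => Disjoint (V i) (V j)) ∧ (⋃ i, V i = Set.univ) := by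
  obtain ⟨t, ht⟩ := isCompact_univ.elim_finite_subcover U (fun x => (hUc x).2)
    (fun x _ => Set.mem_iUnion.2 ⟨x, hxU x⟩)
  set n := t.card
  set f : Fin n ≃ {x // x ∈ t} := t.equivFin.symm
  refine ⟨n, fun i => U (f i) \ ⋃ j ∈ Finset.Iio i, U (f j), fun i => (f i : X),
    fun i => (hUc _).diff (isClopen_biUnion_finset fun j _ => hUc _),
    fun i => Set.diff_subset, ?_, ?_⟩
  · intro i j hij
    rcases hij.lt_or_gt with h | h
    · exact Set.disjoint_left.2 fun x hx hx' =>
        hx'.2 (Set.mem_biUnion (Finset.mem_Iio.2 h) hx.1)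
    · exact Set.disjoint_left.2 fun x hx hx' =>
        hx.2 (Set.mem_biUnion (Finset.mem_Iio.2 h) hx'.1)
  · apply Set.eq_univ_of_forall
    intro x
    have hx : ∃ i : Fin n, x ∈ U (f i) := by
      obtain ⟨y, hy, hxy⟩ := Set.mem_iUnion₂.1 (ht (Set.mem_univ x))
      exact ⟨f.symm ⟨y, hy⟩, by simpa using hxy⟩
    classical
    obtain ⟨i, hi, hmin⟩ := Finset.exists_min_image (Finset.univ.filter fun i => x ∈ U (f i))
      id (by obtain ⟨i, hi⟩ := hx; exact ⟨i, by simp [hi]⟩)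
    simp only [Finset.mem_filter] at hi hmin
    refine Set.mem_iUnion.2 ⟨i, hi.2, ?_⟩
    intro hmem
    obtain ⟨j, hj, hxj⟩ := Set.mem_iUnion₂.1 hmem
    exact absurd (hmin j ⟨Finset.mem_univ j, hxj⟩) (not_le.2 (Finset.mem_Iio.1 hj))

/-- Surjectivity (and hence bijectivity) of the unit `M → Γ(eM)` for a module
`M` over `R_X = Γ(ℚ_X)` on a compact Stone space `X`: any global section of
the étale-ification `eM` — given by clopen neighbourhoods `U x ∋ x` and local
representatives `a x ∈ M` whose germs agree on overlaps — is represented by a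
unique single element `m ∈ M`. -/
theorem stmt12 (X : Type) [TopologicalSpace X] [CompactSpace X] [T2Space X]
    [TotallyDisconnectedSpace X]
    (M : Type) [AddCommGroup M] [Module (LocallyConstant X ℚ) M]
    (U : X → Set X) (hUc : ∀ x, IsClopen (U x)) (hxU : ∀ x, x ∈ U x)
    (a : X → M)
    (compat : ∀ x y z, z ∈ U x → z ∈ U y →
      ∃ (W : Set X) (hW : IsClopen W), z ∈ W ∧ eLC W hW • a x = eLC W hW • a y) :
    ∃! m : M, ∀ x : X,
      ∃ (W : Set X) (hW : IsClopen W), x ∈ W ∧ eLC W hW • m = eLC W hW • a x := by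
  classical
  obtain ⟨n, V, p, hVc, hVU, hdisj, hcov⟩ := exists_partition U hUc hxU
  set m : M := ∑ i, eLC (V i) (hVc i) • a (p i) with hm_def
  have hm : ∀ x : X,
      ∃ (W : Set X) (hW : IsClopen W), x ∈ W ∧ eLC W hW • m = eLC W hW • a x := by
    intro x
    obtain ⟨i, hi⟩ := Set.mem_iUnion.1 (hcov ▸ Set.mem_univ x)
    obtain ⟨W, hW, hxW, hWa⟩ := compat (p i) x x (hVU i hi) (hxU x)
    refine ⟨W ∩ V i, hW.inter (hVc i), ⟨hxW, hi⟩, ?_⟩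
    rw [hm_def, Finset.smul_sum, Finset.sum_eq_single i]
    · rw [eLC_smul_of_subset _ _ Set.inter_subset_right,
        ← eLC_smul_of_subset (hW.inter (hVc i)) hW Set.inter_subset_left (a (p i)), hWa,
        eLC_smul_of_subset _ _ Set.inter_subset_left]
    · intro j _ hj
      rw [← mul_smul, eLC_mul,
        eLC_congr _ isClopen_empty (by
          rw [Set.eq_empty_iff_forall_notMem]
          rintro z ⟨⟨-, hz1⟩, hz2⟩
          exact (hdisj hj.symm).le_bot ⟨hz1, hz2⟩),
        eLC_empty, zero_smul]
    · simp
  refine ⟨m, hm, fun y hy => ?_⟩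
  have key : ∀ x : X, ∃ (W : Set X) (hW : IsClopen W),
      x ∈ W ∧ eLC W hW • y = eLC W hW • m := by
    intro x
    obtain ⟨W1, h1, hx1, e1⟩ := hy x
    obtain ⟨W2, h2, hx2, e2⟩ := hm x
    refine ⟨W1 ∩ W2, h1.inter h2, ⟨hx1, hx2⟩, ?_⟩
    rw [← eLC_smul_of_subset (h1.inter h2) h1 Set.inter_subset_left y, e1,
      ← eLC_smul_of_subset (h1.inter h2) h2 Set.inter_subset_right m, e2,
      eLC_smul_of_subset _ _ Set.inter_subset_left,
      eLC_smul_of_subset _ _ Set.inter_subset_right]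
  choose W' hW' hxW' hyW' using key
  obtain ⟨n', V', p', hVc', hVW', hdisj', hcov'⟩ := exists_partition W' hW' hxW'
  have step : ∀ i, eLC (V' i) (hVc' i) • y = eLC (V' i) (hVc' i) • m := by
    intro i
    rw [← eLC_smul_of_subset (hVc' i) (hW' (p' i)) (hVW' i) y, hyW' (p' i),
      eLC_smul_of_subset _ _ (hVW' i)]
  calc y = (1 : LocallyConstant X ℚ) • y := (one_smul _ _).symm
    _ = (∑ i, eLC (V' i) (hVc' i)) • y := by
        rw [eLC_sum_partition V' hVc' hdisj' hcov']
    _ = ∑ i, eLC (V' i) (hVc' i) • y := Finset.sum_smul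
    _ = ∑ i, eLC (V' i) (hVc' i) • m := Finset.sum_congr rfl fun i _ => step i
    _ = (∑ i, eLC (V' i) (hVc' i)) • m := Finset.sum_smul.symm
    _ = m := by rw [eLC_sum_partition V' hVc' hdisj' hcov', one_smul]
end

section
/- Let X be the one-point compactification of a countably infinite discrete set 𝓕 with limit point G. The category of sheaves of ℚ-modules on X has injective dimension at most 1: every sheaf 𝓖 of ℚ-vector spaces on X embeds into an injective sheaf (the product of skyscraper sheaves on its stalks) with injective quotient, i.e. admits an injective resolution of length 1. -/
/-!
Embed `G` into the product `I₀ = ∏ₓ (skyscraper at x with stalk Gₓ)`. Over a semisimple ring such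
as `ℚ` every module is injective, and the skyscraper functor is right adjoint to the exact stalk
functor, so `I₀` is injective; `G → I₀` is injective on every stalk. At an isolated point `x` the
stalk functor is evaluation on the open set `{x}`, hence commutes with products, and the other
skyscrapers vanish there, so `G → I₀` is an isomorphism on the stalk at `x`. The cokernel `Q`
therefore has zero stalks away from the limit point `∞`, which makes `Q` the skyscraper sheaf at
`∞` on its stalk: injective again.

Stalks in Mathlib need the points of the space and the morphisms of the coefficient category in
the same universe, so the argument is run on `ULift X`, whose sheaves are equivalent to those on
`X`.
-/

open CategoryTheory Limits TopologicalSpace TopCat Opposite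

universe u w

section InjectiveResolution

variable {C : Type*} [Category C] [HasZeroMorphisms C]

/-- The last clause is exactness of `0 → G → I₀ → I₁ → 0` at `I₀`. -/
def HasInjectiveResolutionOfLengthOne (G : C) : Prop :=
  ∃ (I₀ I₁ : C) (f : G ⟶ I₀) (g : I₀ ⟶ I₁),
    Injective I₀ ∧ Injective I₁ ∧ Mono f ∧ Epi g ∧ f ≫ g = 0 ∧
      ∀ (Z : C) (h : Z ⟶ I₀), h ≫ g = 0 → ∃ k : Z ⟶ G, k ≫ f = h

lemma HasInjectiveResolutionOfLengthOne.of_iso {G G' : C} (e : G ≅ G')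
    (hG' : HasInjectiveResolutionOfLengthOne G') : HasInjectiveResolutionOfLengthOne G := by
  obtain ⟨I₀, I₁, f, g, hI₀, hI₁, hf, hg, hfg, hker⟩ := hG'
  refine ⟨I₀, I₁, e.hom ≫ f, g, hI₀, hI₁, mono_comp _ _, hg, by simp [hfg], fun Z h hh => ?_⟩
  obtain ⟨k, hk⟩ := hker Z h hh
  exact ⟨k ≫ e.inv, by simpa using hk⟩

lemma HasInjectiveResolutionOfLengthOne.map {D : Type*} [Category D] [HasZeroMorphisms D]
    (E : C ≌ D) {G : C} (hG : HasInjectiveResolutionOfLengthOne G) :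
    HasInjectiveResolutionOfLengthOne (E.functor.obj G) := by
  obtain ⟨I₀, I₁, f, g, hI₀, hI₁, hf, hg, hfg, hker⟩ := hG
  let adj := E.symm.toAdjunction
  refine ⟨E.functor.obj I₀, E.functor.obj I₁, E.functor.map f, E.functor.map g,
    Injective.injective_of_adjoint adj I₀, Injective.injective_of_adjoint adj I₁,
    E.functor.map_mono f, E.functor.map_epi g, by rw [← Functor.map_comp, hfg, Functor.map_zero],
    fun Z h hh => ?_⟩
  have hh' : (adj.homEquiv _ _).symm h ≫ g = 0 := by
    rw [← adj.homEquiv_naturality_right_symm]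
    change (adj.homEquiv _ _).symm (h ≫ E.functor.map g) = 0
    simp [hh, adj.homEquiv_counit]
  obtain ⟨k, hk⟩ := hker _ _ hh'
  exact ⟨adj.homEquiv _ _ k, (adj.homEquiv_naturality_right k f).symm.trans (by simp [hk])⟩

lemma HasInjectiveResolutionOfLengthOne.of_equivalence {D : Type*} [Category D]
    [HasZeroMorphisms D] (E : C ≌ D) {G : C}
    (hG : HasInjectiveResolutionOfLengthOne (E.functor.obj G)) :
    HasInjectiveResolutionOfLengthOne G :=
  .of_iso (E.unitIso.app G) (hG.map E.symm)

end InjectiveResolution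

lemma isIso_π_of_isZero {β : Type*} {C : Type*} [Category C] [HasZeroMorphisms C]
    (f : β → C) [HasProduct f] (b : β) (hf : ∀ j, j ≠ b → IsZero (f j)) : IsIso (Pi.π f b) := by
  classical
  refine ⟨Pi.lift fun j => if h : b = j then eqToHom (congrArg f h) else 0, ?_, by simp⟩
  refine Pi.hom_ext _ _ fun j => ?_
  by_cases h : b = j
  · subst h; simp
  · exact (hf j (Ne.symm h)).eq_of_tgt _ _

-- Mathlib has these two instances only for modules in the universe of the ring.
instance ModuleCat.forget₂AddCommGroup_preservesFilteredColimits' {R : Type} [Ring R] :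
    PreservesFilteredColimits (forget₂ (ModuleCat.{u} R) AddCommGrpCat.{u}) where
  preserves_filtered_colimits _ _ _ :=
    { preservesColimit := fun {F} =>
        preservesColimit_of_preserves_colimit_cocone
          (ModuleCat.FilteredColimits.colimitCoconeIsColimit.{u, 0} F)
          (AddCommGrpCat.FilteredColimits.colimitCoconeIsColimit.{u, 0}
            (F ⋙ forget₂ (ModuleCat.{u} R) AddCommGrpCat.{u})) }

instance ModuleCat.forget_preservesFilteredColimits' {R : Type} [Ring R] :
    PreservesFilteredColimits (forget (ModuleCat.{u} R)) :=
  comp_preservesFilteredColimits (forget₂ (ModuleCat R) AddCommGrpCat) (forget AddCommGrpCat)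

lemma ModuleCat.injective_of_isSemisimpleRing {R : Type w} [Ring R] [IsSemisimpleRing R]
    (M : ModuleCat.{u} R) : Injective M :=
  have := Module.injective_of_isSemisimpleRing R M
  Module.injective_object_of_injective_module R M

namespace Homeomorph

variable {X Y : Type*} [TopologicalSpace X] [TopologicalSpace Y]

lemma opensGrothendieckTopology_eq_inducedTopology (e : X ≃ₜ Y) :
    Opens.grothendieckTopology Y =
      e.opensCongr.equivalence.inverse.inducedTopology (Opens.grothendieckTopology X) := by
  refine GrothendieckTopology.ext (funext fun V => Set.ext fun S => ?_)
  rw [Functor.mem_inducedTopology_iff_of_isCoverDense]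
  constructor
  · intro hS x hx
    obtain ⟨W, f, hW, hxW⟩ := hS (e x) hx
    exact ⟨_, e.opensCongr.equivalence.inverse.map f, ⟨W, f, 𝟙 _, hW, (Category.id_comp _).symm⟩,
      hxW⟩
  · intro hS y hy
    obtain ⟨W, f, ⟨U, fU, hf, hSU, -⟩, hxW⟩ := hS (e.symm y) (by simpa using hy)
    exact ⟨U, fU, hSU, by simpa using leOfHom hf hxW⟩

instance (e : X ≃ₜ Y) : e.opensCongr.equivalence.inverse.IsDenseSubsite
    (Opens.grothendieckTopology Y) (Opens.grothendieckTopology X) := by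
  rw [e.opensGrothendieckTopology_eq_inducedTopology]
  infer_instance

noncomputable def sheafCongr (e : X ≃ₜ Y) (A : Type*) [Category A] :
    Sheaf (Opens.grothendieckTopology X) A ≌ Sheaf (Opens.grothendieckTopology Y) A :=
  e.opensCongr.equivalence.sheafCongr _ _ A

end Homeomorph

section Stalks

variable {C : Type*} [Category.{u} C] [HasColimits C] {X : TopCat.{u}}

lemma isIso_germ_of_isOpen_singleton (F : X.Presheaf C) {x : X} (hx : IsOpen ({x} : Set X)) :
    IsIso (F.germ ⟨{x}, hx⟩ x rfl) := by
  have : IsInitial (⟨⟨{x}, hx⟩, rfl⟩ : OpenNhds x) :=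
    IsInitial.ofUniqueHom (fun V => homOfLE fun _ hy => (Set.mem_singleton_iff.mp hy) ▸ V.2)
      fun _ _ => Subsingleton.elim _ _
  exact isIso_ι_of_isTerminal (terminalOpOfInitial this) ((OpenNhds.inclusion x).op ⋙ F)

noncomputable def stalkFunctorIsoEvaluationOfIsOpenSingleton {x : X} (hx : IsOpen ({x} : Set X)) :
    (evaluation _ C).obj (op ⟨{x}, hx⟩) ≅ Presheaf.stalkFunctor C x :=
  NatIso.ofComponents
    (fun F => @asIso _ _ _ _ (Presheaf.germ F ⟨{x}, hx⟩ x rfl)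
      (isIso_germ_of_isOpen_singleton F hx))
    fun f => (Presheaf.stalkFunctor_map_germ ⟨{x}, hx⟩ x rfl f).symm

lemma preservesLimits_stalkFunctor_of_isOpen_singleton [HasLimits C] {x : X}
    (hx : IsOpen ({x} : Set X)) : PreservesLimits (Presheaf.stalkFunctor C x) :=
  have : PreservesLimits ((evaluation (Opens X)ᵒᵖ C).obj (op ⟨{x}, hx⟩)) := inferInstance
  preservesLimits_of_natIso (stalkFunctorIsoEvaluationOfIsOpenSingleton hx)

end Stalks

section Skyscraper

variable {C : Type*} [Category.{u} C] [HasColimits C] [HasTerminal C] {X : TopCat.{u}}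

lemma isIso_stalkFunctor_map_unit_stalkSkyscraperSheafAdjunction (p : X)
    [∀ U : Opens X, Decidable (p ∈ U)] (F : X.Sheaf C) :
    IsIso ((Presheaf.stalkFunctor C p).map
      ((stalkSkyscraperSheafAdjunction p).unit.app F).hom) := by
  have : IsIso ((stalkSkyscraperSheafAdjunction p).counit.app
      ((Sheaf.forget C X ⋙ Presheaf.stalkFunctor C p).obj F)) := by
    dsimp [stalkSkyscraperSheafAdjunction, StalkSkyscraperPresheafAdjunctionAuxs.counit]
    exact Iso.isIso_hom _
  -- triangle identity `L.map (η F) ≫ ε (L F) = 𝟙` with `ε` invertible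
  exact @IsIso.of_isIso_fac_right _ _ _ _ _ _ _ _ this (IsIso.id _)
    ((stalkSkyscraperSheafAdjunction p).left_triangle_components F)

lemma isZero_stalk_skyscraperSheaf_of_not_specializes [HasZeroMorphisms C] {p x : X}
    [∀ U : Opens X, Decidable (p ∈ U)] (A : C) (h : ¬p ⤳ x) :
    IsZero ((skyscraperSheaf p A).presheaf.stalk x) :=
  (skyscraperPresheafStalkOfNotSpecializesIsTerminal p A h).isZero

open scoped Classical in
noncomputable def toSkyscraperStalks [HasLimits C] (F : X.Sheaf C) :
    F ⟶ ∏ᶜ fun x : X => skyscraperSheaf x (F.presheaf.stalk x) :=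
  Pi.lift fun x => (stalkSkyscraperSheafAdjunction x).unit.app F

open scoped Classical in
lemma toSkyscraperStalks_π [HasLimits C] (F : X.Sheaf C) (x : X) :
    toSkyscraperStalks F ≫ Pi.π _ x = (stalkSkyscraperSheafAdjunction x).unit.app F :=
  Pi.lift_π _ _

open scoped Classical in
lemma isIso_stalkFunctor_map_π_skyscraperSheaf_of_isOpen_singleton [HasLimits C]
    [HasZeroMorphisms C] (A : X → C) {x : X} (hx : IsOpen ({x} : Set X)) :
    IsIso ((Presheaf.stalkFunctor C x).map (Pi.π (fun y => skyscraperSheaf y (A y)) x).hom) := by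
  let L := Sheaf.forget C X ⋙ Presheaf.stalkFunctor C x
  have := preservesLimits_stalkFunctor_of_isOpen_singleton (C := C) hx
  have : IsIso (Pi.π (fun y => L.obj (skyscraperSheaf y (A y))) x) :=
    isIso_π_of_isZero _ x fun y hy =>
      isZero_stalk_skyscraperSheaf_of_not_specializes _ fun h => hy (h.mem_open hx rfl)
  have : IsIso (piComparison L fun y => skyscraperSheaf y (A y)) := by
    rw [← PreservesProduct.iso_hom]; infer_instance
  change IsIso (L.map _)
  rw [← piComparison_comp_π]
  infer_instance

open scoped Classical in
lemma isIso_stalkFunctor_map_toSkyscraperStalks_of_isOpen_singleton [HasLimits C]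
    [HasZeroMorphisms C] (F : X.Sheaf C) {x : X} (hx : IsOpen ({x} : Set X)) :
    IsIso ((Presheaf.stalkFunctor C x).map (toSkyscraperStalks F).hom) := by
  have hfac :=
    congrArg (Sheaf.forget C X ⋙ Presheaf.stalkFunctor C x).map (toSkyscraperStalks_π F x)
  rw [Functor.map_comp] at hfac
  exact @IsIso.of_isIso_fac_right _ _ _ _ _ _ _ _
    (isIso_stalkFunctor_map_π_skyscraperSheaf_of_isOpen_singleton (F.presheaf.stalk ·) hx)
    (isIso_stalkFunctor_map_unit_stalkSkyscraperSheafAdjunction x F) hfac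

end Skyscraper

section ModuleSheaf

variable {R : Type} [Ring R] {X : TopCat.{u}}

lemma injective_skyscraperSheaf (p : X) [∀ U : Opens X, Decidable (p ∈ U)]
    (A : ModuleCat.{u} R) [Injective A] : Injective (skyscraperSheaf p A) :=
  Injective.injective_of_adjoint (stalkSkyscraperSheafAdjunction p) A

open scoped Classical in
lemma mono_toSkyscraperStalks (F : X.Sheaf (ModuleCat.{u} R)) :
    Mono (toSkyscraperStalks F) := by
  rw [Presheaf.mono_iff_stalk_mono]
  intro x
  have hfac := congrArg (Sheaf.forget _ X ⋙ Presheaf.stalkFunctor _ x).map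
    (toSkyscraperStalks_π F x)
  rw [Functor.map_comp] at hfac
  have : IsIso ((Sheaf.forget _ X ⋙ Presheaf.stalkFunctor _ x).map
      ((stalkSkyscraperSheafAdjunction x).unit.app F)) :=
    isIso_stalkFunctor_map_unit_stalkSkyscraperSheafAdjunction x F
  exact @mono_of_mono_fac _ _ _ _ _ _ _ _ (@IsIso.mono_of_iso _ _ _ _ _ this) hfac

lemma isZero_stalk_cokernel_of_isIso {F G : X.Sheaf (ModuleCat.{u} R)} (f : F ⟶ G) (x : X)
    (hf : IsIso ((Presheaf.stalkFunctor _ x).map f.hom)) :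
    IsZero ((cokernel f).presheaf.stalk x) := by
  let L := Sheaf.forget (ModuleCat.{u} R) X ⋙ Presheaf.stalkFunctor _ x
  have : IsIso (L.map f) := hf
  exact (isZero_zero _).of_iso ((PreservesCokernel.iso L f).trans (cokernel.ofEpi (L.map f)))

lemma isIso_unit_stalkSkyscraperSheafAdjunction_of_isZero_stalk
    (F : X.Sheaf (ModuleCat.{u} R)) (p : X) [∀ U : Opens X, Decidable (p ∈ U)]
    (hp : ∀ x, x ≠ p → ¬p ⤳ x) (hF : ∀ x, x ≠ p → IsZero (F.presheaf.stalk x)) :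
    IsIso ((stalkSkyscraperSheafAdjunction p).unit.app F) := by
  have (x : X) : IsIso ((Presheaf.stalkFunctor _ x).map
      ((stalkSkyscraperSheafAdjunction p).unit.app F).hom) := by
    by_cases hx : x = p
    · subst hx
      exact isIso_stalkFunctor_map_unit_stalkSkyscraperSheafAdjunction x F
    · exact (hF x hx).isIso (isZero_stalk_skyscraperSheaf_of_not_specializes _ (hp x hx)) _
  exact Presheaf.isIso_of_stalkFunctor_map_iso _

open scoped Classical in
theorem hasInjectiveResolutionOfLengthOne_of_isOpen_singleton [IsSemisimpleRing R] (p : X)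
    (hX : ∀ x, x ≠ p → IsOpen ({x} : Set X)) (F : X.Sheaf (ModuleCat.{u} R)) :
    HasInjectiveResolutionOfLengthOne F := by
  let f := toSkyscraperStalks F
  have : Mono f := mono_toSkyscraperStalks F
  have hQ : IsIso ((stalkSkyscraperSheafAdjunction p).unit.app (cokernel f)) :=
    isIso_unit_stalkSkyscraperSheafAdjunction_of_isZero_stalk _ p
      (fun x hx h => hx (h.mem_open (hX x hx) rfl).symm) fun x hx =>
        isZero_stalk_cokernel_of_isIso f x
          (isIso_stalkFunctor_map_toSkyscraperStalks_of_isOpen_singleton F (hX x hx))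
  have (x : X) : Injective (skyscraperSheaf x (F.presheaf.stalk x)) :=
    have := ModuleCat.injective_of_isSemisimpleRing (F.presheaf.stalk x)
    injective_skyscraperSheaf x _
  have hQ_injective : Injective (cokernel f) :=
    have : Injective ((Sheaf.forget _ X ⋙ Presheaf.stalkFunctor _ p).obj (cokernel f)) :=
      ModuleCat.injective_of_isSemisimpleRing _
    Injective.of_iso (asIso ((stalkSkyscraperSheafAdjunction p).unit.app (cokernel f))).symm
      (injective_skyscraperSheaf p _)
  exact ⟨_, cokernel f, f, cokernel.π f, inferInstance, hQ_injective, inferInstance, inferInstance,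
    cokernel.condition f, fun Z h hh => ⟨Abelian.monoLift f h hh, Abelian.monoLift_comp f h hh⟩⟩

end ModuleSheaf

lemma OnePoint.isOpen_singleton_coe {D : Type*} [TopologicalSpace D] [DiscreteTopology D] (d : D) :
    IsOpen {(d : OnePoint D)} := by
  simpa using OnePoint.isOpen_image_coe.2 (isOpen_discrete {d})

lemma ULift.isOpen_singleton {D : Type*} [TopologicalSpace D] {x : ULift.{u} D}
    (hx : IsOpen {x.down}) : IsOpen {x} := by
  have : ({x} : Set (ULift D)) = Homeomorph.ulift ⁻¹' {x.down} := Set.ext fun _ => ULift.ext_iff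
  exact this ▸ Homeomorph.ulift.isOpen_preimage.2 hx

/-- The category of sheaves of `ℚ`-modules on the one-point compactification
`X` of a countably infinite discrete set has injective dimension at most 1:
every sheaf `G` fits in an exact sequence `0 → G → I₀ → I₁ → 0` with `I₀`,
`I₁` injective (exactness at `I₀` is expressed by: `f` is mono, `f ≫ g = 0`,
and every map killing `g` factors through `f`). -/
theorem stmt14
    (G : Sheaf (Opens.grothendieckTopology (TopCat.of (OnePoint ℕ))) (ModuleCat ℚ)) :
    ∃ (I₀ I₁ : Sheaf (Opens.grothendieckTopology (TopCat.of (OnePoint ℕ))) (ModuleCat ℚ))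
      (f : G ⟶ I₀) (g : I₀ ⟶ I₁),
        Injective I₀ ∧ Injective I₁ ∧ Mono f ∧ Epi g ∧ f ≫ g = 0 ∧
        ∀ (Z : Sheaf (Opens.grothendieckTopology (TopCat.of (OnePoint ℕ))) (ModuleCat ℚ))
          (h : Z ⟶ I₀), h ≫ g = 0 → ∃ k : Z ⟶ G, k ≫ f = h := by
  refine HasInjectiveResolutionOfLengthOne.of_equivalence
    ((Homeomorph.ulift.symm : OnePoint ℕ ≃ₜ ULift (OnePoint ℕ)).sheafCongr _) ?_
  refine hasInjectiveResolutionOfLengthOne_of_isOpen_singleton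
    (X := TopCat.of (ULift (OnePoint ℕ))) (ULift.up OnePoint.infty) ?_ _
  rintro ⟨x | n⟩ hx
  · exact absurd rfl hx
  · exact ULift.isOpen_singleton (OnePoint.isOpen_singleton_coe n)
end
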